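/- All maximal-dimensional simplices whose vertices are vertices of the root polytope Q_G of a connected bipartite graph G have the same (|E|+|V|-2)-dimensional volume. -/

import Mathlib

open scoped Classical

/-- The bipartite graph on vertex set `E ⊕ V` determined by a set of edges
`edges ⊆ E × V` (each pair `(e, v)` is an edge `ev`). -/
def biGraph {E V : Type} (edges : Set (E × V)) : SimpleGraph (E ⊕ V) :=
  SimpleGraph.fromRel (fun a b => ∃ p ∈ edges, a = Sum.inl p.1 ∧ b = Sum.inr p.2)

/-- The point `𝐞 + 𝐯` of `ℝ^E ⊕ ℝ^V` corresponding to an edge `ev`. -/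
noncomputable def rootPt (E V : Type) (p : E × V) : (E → ℝ) × (V → ℝ) :=
  (Pi.single p.1 1, Pi.single p.2 1)

/-- The root polytope of the bipartite graph with edge set `edges`. -/
noncomputable def rootPolytope {E V : Type} (edges : Set (E × V)) :
    Set ((E → ℝ) × (V → ℝ)) :=
  convexHull ℝ (rootPt E V '' edges)

open MeasureTheory

/-! The edge vectors `x - p` of a maximal simplex `S` with apex `p` form a basis of the direction
space `W` of `aff Q_G`, so two maximal simplices are related by a linear automorphism of `W`,
which scales Haar measure by `|det|`. This determinant is `±1` because both bases generate the
same lattice: the `ℤ`-span of the differences of vertices of `Q_G`.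

A maximal simplex generates the whole lattice by connectivity. Fix an edge `e₀v₀` of `S` and let
`C` be the set of graph vertices whose offset (`𝐞 - 𝐞₀` for `e ∈ E`, `𝐯₀ - 𝐯` for `v ∈ V`) lies
in the `ℤ`-span of `S - p`. Every edge of `S` has both ends in `C` or neither. So does every edge
`ev` of `G`: otherwise the linear functional `∑_{e ∈ C} x_e - ∑_{v ∈ C} x_v`, which vanishes on
`S`, would not vanish at `𝐞 + 𝐯 ∈ aff S`. Hence `C` contains every vertex of `G`. -/

open Set Submodule

lemma SimpleGraph.Reachable.mem_of_adj_closed {α : Type*} {G : SimpleGraph α} {C : Set α}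
    (hC : ∀ a b, G.Adj a b → a ∈ C → b ∈ C) {a b : α} (hab : G.Reachable a b) (ha : a ∈ C) :
    b ∈ C := by
  rw [G.reachable_iff_reflTransGen] at hab
  induction hab with
  | refl => exact ha
  | tail _ hbc ih => exact hC _ _ hbc ih

namespace Module.Basis

variable {ι W : Type*} [Fintype ι] [DecidableEq ι] [AddCommGroup W] [Module ℝ W]

lemma exists_det_eq_intCast (b : Basis ι ℝ W) {v : ι → W}
    (hv : ∀ i, v i ∈ span ℤ (range b)) : ∃ n : ℤ, b.det v = n := by
  refine ⟨((b.restrictScalars ℤ).toMatrix fun i => ⟨v i, hv i⟩).det, ?_⟩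
  have := congrArg Matrix.det (b.restrictScalars_toMatrix ℤ fun i => ⟨v i, hv i⟩)
  rw [← RingHom.map_det, eq_intCast] at this
  rw [b.det_apply, ← this]

lemma abs_det_eq_one_of_span_int_eq (b b' : Basis ι ℝ W)
    (h : span ℤ (range b) = span ℤ (range b')) : |b.det b'| = 1 := by
  obtain ⟨m, hm⟩ := b.exists_det_eq_intCast (v := b') fun i => h ▸ subset_span (mem_range_self i)
  obtain ⟨n, hn⟩ :=
    b'.exists_det_eq_intCast (v := b) fun i => h.symm ▸ subset_span (mem_range_self i)
  have hmn : ((m * n : ℤ) : ℝ) = 1 := by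
    rw [Int.cast_mul, ← hm, ← hn, b.det_mul_det, b.det_self]
  replace hmn : m * n = 1 := by exact_mod_cast hmn
  rcases Int.eq_one_or_neg_one_of_mul_eq_one hmn with rfl | rfl <;> simp [hm]

end Module.Basis

lemma addHaar_convexHull_basis_eq_of_span_int_eq {ι ι' W : Type*} [NormedAddCommGroup W]
    [NormedSpace ℝ W] [MeasurableSpace W] [BorelSpace W] [FiniteDimensional ℝ W]
    (μ : Measure W) [μ.IsAddHaarMeasure] (b : Module.Basis ι ℝ W) (b' : Module.Basis ι' ℝ W)
    (h : span ℤ (range b) = span ℤ (range b')) :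
    μ (convexHull ℝ (insert 0 (range b))) = μ (convexHull ℝ (insert 0 (range b'))) := by
  have := FiniteDimensional.fintypeBasisIndex b
  let c := b'.reindex (b'.indexEquiv b)
  have hc : range c = range b' := b'.range_reindex _
  let f : W →ₗ[ℝ] W := b.equiv c (Equiv.refl ι)
  have hf : f '' convexHull ℝ (insert 0 (range b)) = convexHull ℝ (insert 0 (range c)) := by
    rw [f.image_convexHull, image_insert_eq, ← range_comp]
    simp [f, Function.comp_def]
  have hdet : |LinearMap.det f| = 1 := by
    rw [Module.Basis.det_basis]
    exact b.abs_det_eq_one_of_span_int_eq c (hc ▸ h)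
  rw [← hc, ← hf, Measure.addHaar_image_linearMap, hdet, ENNReal.ofReal_one, one_mul]

namespace Submodule

variable {F : Type*} [NormedAddCommGroup F] [NormedSpace ℝ F] (W : Submodule ℝ F)

lemma exists_basis_coe_eq {s : Set F} (hs : LinearIndependent ℝ ((↑) : s → F))
    (hsW : span ℝ s = W) : ∃ b : Module.Basis s ℝ W, ∀ i, (b i : F) = i :=
  ⟨(Module.Basis.span hs).map (LinearEquiv.ofEq _ _ (by rwa [Subtype.range_coe])),
    fun _ => by simp⟩

lemma preimage_coe_convexHull_insert_zero_image (A : Set W) :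
    ((↑) : W → F) ⁻¹' convexHull ℝ (insert 0 ((↑) '' A)) = convexHull ℝ (insert 0 A) := by
  rw [← ZeroMemClass.coe_zero W, ← image_insert_eq, ← W.coe_subtype,
    ← W.subtype.image_convexHull, preimage_image_eq _ W.injective_subtype]

lemma span_int_eq_of_span_int_coe_eq {A B : Set W}
    (h : span ℤ ((↑) '' A : Set F) = span ℤ ((↑) '' B)) : span ℤ A = span ℤ B := by
  apply map_injective_of_injective (f := W.subtype.restrictScalars ℤ) Subtype.val_injective
  simpa only [map_span, LinearMap.coe_restrictScalars, coe_subtype] using h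

lemma addHaar_preimage_convexHull_eq_of_span_int_eq [MeasurableSpace F] [BorelSpace F]
    [FiniteDimensional ℝ W] (μ : Measure W) [μ.IsAddHaarMeasure] {s t : Set F}
    (hs : LinearIndependent ℝ ((↑) : s → F)) (ht : LinearIndependent ℝ ((↑) : t → F))
    (hsW : span ℝ s = W) (hst : span ℤ s = span ℤ t) :
    μ ((↑) ⁻¹' convexHull ℝ (insert 0 s)) = μ ((↑) ⁻¹' convexHull ℝ (insert 0 t)) := by
  have htW : span ℝ t = W := by
    rw [← span_span_of_tower ℤ, ← hst, span_span_of_tower, hsW]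
  obtain ⟨b, hb⟩ := W.exists_basis_coe_eq hs hsW
  obtain ⟨b', hb'⟩ := W.exists_basis_coe_eq ht htW
  have himage : ∀ {u : Set F} (c : Module.Basis u ℝ W), (∀ i, (c i : F) = i) →
      (↑) '' range c = u := by
    intro u c hc
    rw [← range_comp]
    ext; simp [hc]
  rw [← himage b hb, ← himage b' hb'] at hst ⊢
  simp only [W.preimage_coe_convexHull_insert_zero_image]
  exact addHaar_convexHull_basis_eq_of_span_int_eq μ b b' (W.span_int_eq_of_span_int_coe_eq hst)

end Submodule

lemma span_image_sub_diff_eq_vectorSpan {k F : Type*} [Ring k] [AddCommGroup F] [Module k F]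
    {p : F} {S : Set F} (hp : p ∈ S) :
    span k ((· - p) '' (S \ {p})) = vectorSpan k S := by
  simpa only [vsub_eq_sub] using (vectorSpan_eq_span_vsub_set_right_ne k hp).symm

lemma image_sub_convexHull_eq {F : Type*} [AddCommGroup F] [Module ℝ F] {p : F} {S : Set F}
    (hp : p ∈ S) :
    (· - p) '' convexHull ℝ S = convexHull ℝ (insert 0 ((· - p) '' (S \ {p}))) := by
  have hS : (· - p) '' S = insert 0 ((· - p) '' (S \ {p})) := by
    conv_lhs => rw [← insert_eq_of_mem hp, ← insert_sdiff_singleton, image_insert_eq, sub_self]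
  rw [← hS]
  simpa [← image_vadd, sub_eq_add_neg, add_comm] using (convexHull_vadd (-p) S).symm

section RootPolytope

variable {E V : Type}

lemma mem_of_biGraph_connected {edges : Set (E × V)} (hconn : (biGraph edges).Connected)
    {C : Set (E ⊕ V)} (hC : ∀ q ∈ edges, (Sum.inl q.1 ∈ C ↔ Sum.inr q.2 ∈ C)) {a : E ⊕ V}
    (ha : a ∈ C) (b : E ⊕ V) : b ∈ C := by
  refine (hconn.preconnected a b).mem_of_adj_closed ?_ ha
  rintro _ _ ⟨-, ⟨q, hq, rfl, rfl⟩ | ⟨q, hq, rfl, rfl⟩⟩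
  · exact (hC q hq).1
  · exact (hC q hq).2

noncomputable def vertexOffset (t₀ : E × V) : E ⊕ V → (E → ℝ) × (V → ℝ)
  | .inl e => (Pi.single e 1 - Pi.single t₀.1 1, 0)
  | .inr v => (0, Pi.single t₀.2 1 - Pi.single v 1)

lemma rootPt_sub_rootPt (t₀ q : E × V) :
    rootPt E V q - rootPt E V t₀ = vertexOffset t₀ (.inl q.1) - vertexOffset t₀ (.inr q.2) := by
  ext <;> simp [rootPt, vertexOffset]

variable [Fintype E] [Fintype V]

noncomputable def cutFunctional (C : Set (E ⊕ V)) : ((E → ℝ) × (V → ℝ)) →ₗ[ℝ] ℝ :=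
  (∑ e with Sum.inl e ∈ C, LinearMap.proj e).coprod (-∑ v with Sum.inr v ∈ C, LinearMap.proj v)

lemma cutFunctional_rootPt_eq_zero_iff (C : Set (E ⊕ V)) (q : E × V) :
    cutFunctional C (rootPt E V q) = 0 ↔ (Sum.inl q.1 ∈ C ↔ Sum.inr q.2 ∈ C) := by
  simp only [cutFunctional, rootPt, LinearMap.coprod_apply, LinearMap.coe_sum, LinearMap.coe_proj,
    Finset.sum_apply, Function.eval, Pi.single_apply, Finset.sum_ite_eq', Finset.mem_filter,
    Finset.mem_univ, true_and, LinearMap.neg_apply]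
  split_ifs <;> simp_all

lemma inl_mem_iff_inr_mem_of_rootPt_mem_affineSpan {C : Set (E ⊕ V)} {T : Set (E × V)}
    (hC : ∀ t ∈ T, (Sum.inl t.1 ∈ C ↔ Sum.inr t.2 ∈ C)) {q : E × V}
    (hq : rootPt E V q ∈ affineSpan ℝ (rootPt E V '' T)) :
    Sum.inl q.1 ∈ C ↔ Sum.inr q.2 ∈ C := by
  have hker :
      affineSpan ℝ (rootPt E V '' T) ≤ (LinearMap.ker (cutFunctional C)).toAffineSubspace := by
    rw [affineSpan_le]
    rintro _ ⟨t, ht, rfl⟩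
    exact (cutFunctional_rootPt_eq_zero_iff C t).2 (hC t ht)
  exact (cutFunctional_rootPt_eq_zero_iff C q).1 (hker hq)

theorem vectorSpan_int_rootPt_le {edges : Set (E × V)} (hconn : (biGraph edges).Connected)
    {T : Set (E × V)} (hT : rootPt E V '' edges ⊆ affineSpan ℝ (rootPt E V '' T)) :
    vectorSpan ℤ (rootPt E V '' edges) ≤ vectorSpan ℤ (rootPt E V '' T) := by
  obtain rfl | ⟨t₀, ht₀⟩ := T.eq_empty_or_nonempty
  · simp_all
  set M := vectorSpan ℤ (rootPt E V '' T)
  let C : Set (E ⊕ V) := {x | vertexOffset t₀ x ∈ M}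
  have hCT : ∀ t ∈ T, (Sum.inl t.1 ∈ C ↔ Sum.inr t.2 ∈ C) := by
    intro t ht
    have hmem : vertexOffset t₀ (.inl t.1) - vertexOffset t₀ (.inr t.2) ∈ M := by
      rw [← rootPt_sub_rootPt]
      exact vsub_mem_vectorSpan ℤ (mem_image_of_mem _ ht) (mem_image_of_mem _ ht₀)
    exact ⟨fun h => by simpa [C] using M.sub_mem h hmem,
      fun h => by simpa [C] using M.add_mem hmem h⟩
  have hC : ∀ x, x ∈ C :=
    mem_of_biGraph_connected hconn
      (fun q hq => inl_mem_iff_inr_mem_of_rootPt_mem_affineSpan hCT (hT (mem_image_of_mem _ hq)))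
      (a := .inl t₀.1) (by simp [C, vertexOffset, Prod.mk_zero_zero])
  have hroot : ∀ q, rootPt E V q - rootPt E V t₀ ∈ M := fun q => by
    rw [rootPt_sub_rootPt]
    exact M.sub_mem (hC _) (hC _)
  rw [vectorSpan_def, span_le]
  rintro _ ⟨_, ⟨q, -, rfl⟩, _, ⟨q', -, rfl⟩, rfl⟩
  simpa using M.sub_mem (hroot q) (hroot q')

theorem vectorSpan_int_eq_of_affineSpan_eq {edges : Set (E × V)}
    (hconn : (biGraph edges).Connected) {S : Set ((E → ℝ) × (V → ℝ))}
    (hS : S ⊆ rootPt E V '' edges) (hsp : affineSpan ℝ S = affineSpan ℝ (rootPt E V '' edges)) :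
    vectorSpan ℤ S = vectorSpan ℤ (rootPt E V '' edges) := by
  have hS' : rootPt E V '' (rootPt E V ⁻¹' S) = S :=
    image_preimage_eq_of_subset (hS.trans (image_subset_range _ _))
  refine le_antisymm (vectorSpan_mono ℤ hS) ?_
  rw [← hS']
  refine vectorSpan_int_rootPt_le hconn ?_
  rw [hS', hsp]
  exact subset_affineSpan ℝ _

end RootPolytope

/-- All maximal-dimensional simplices whose vertices are
vertices of the root polytope `Q_G` of a connected bipartite graph `G` have the
same `(|E|+|V|-2)`-dimensional volume: translating each simplex by one of its
vertices into the direction space `W` of the affine hull of `Q_G`, any Haar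
measure on `W` gives the two simplices equal measure. -/
theorem maximal_simplices_equal_volume {E V : Type} [Fintype E] [Fintype V]
    (edges : Set (E × V)) (hconn : (biGraph edges).Connected)
    (S₁ S₂ : Set ((E → ℝ) × (V → ℝ)))
    (hS₁ : S₁ ⊆ rootPt E V '' edges) (hS₂ : S₂ ⊆ rootPt E V '' edges)
    (hi₁ : AffineIndependent ℝ ((↑) : S₁ → (E → ℝ) × (V → ℝ)))
    (hi₂ : AffineIndependent ℝ ((↑) : S₂ → (E → ℝ) × (V → ℝ)))
    (hsp₁ : affineSpan ℝ S₁ = affineSpan ℝ (rootPt E V '' edges))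
    (hsp₂ : affineSpan ℝ S₂ = affineSpan ℝ (rootPt E V '' edges))
    (p₁ : (E → ℝ) × (V → ℝ)) (hp₁ : p₁ ∈ S₁)
    (p₂ : (E → ℝ) × (V → ℝ)) (hp₂ : p₂ ∈ S₂)
    (μ : Measure (affineSpan ℝ (rootPt E V '' edges)).direction)
    (hμ : μ.IsAddHaarMeasure) :
    μ (Subtype.val ⁻¹' ((fun x => x - p₁) '' convexHull ℝ S₁)) =
      μ (Subtype.val ⁻¹' ((fun x => x - p₂) '' convexHull ℝ S₂)) := by
  rw [image_sub_convexHull_eq hp₁, image_sub_convexHull_eq hp₂]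
  refine Submodule.addHaar_preimage_convexHull_eq_of_span_int_eq _ μ
    ((affineIndependent_set_iff_linearIndependent_vsub ℝ hp₁).1 hi₁)
    ((affineIndependent_set_iff_linearIndependent_vsub ℝ hp₂).1 hi₂) ?_ ?_
  · rw [span_image_sub_diff_eq_vectorSpan hp₁, ← direction_affineSpan, hsp₁]
  · rw [span_image_sub_diff_eq_vectorSpan hp₁, span_image_sub_diff_eq_vectorSpan hp₂,
      vectorSpan_int_eq_of_affineSpan_eq hconn hS₁ hsp₁,
      vectorSpan_int_eq_of_affineSpan_eq hconn hS₂ hsp₂]
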